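/- arXiv:1403.7146 — 3 statements merged into one kernel-verified Lean document; each statement's English description precedes it below -/
import Mathlib

section
/- Let the parameters satisfy ε > 0, σ > 0, v₀ > 0, k > 0, m > 0, and 0 ≤ γ. If (u, v) ∈ ℝ² with u ≥ 0 and v ≥ 0 satisfies g(u,v) = 0 and h(u,v) = 0, then 0 < u < (ε + σ·v₀)/m and 0 < v < v₀ + ε/σ. -/
/-- For positive ε, σ, v₀, k, m and γ ≥ 0, any nonnegative homogeneous steady state
(u,v) of the bacteria-nutrient kinetics satisfies
0 < u < (ε + σ·v₀)/m and 0 < v < v₀ + ε/σ. -/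
theorem stmt_4 (γ k m ε σ v₀ u v : ℝ)
    (hε : 0 < ε) (hσ : 0 < σ) (hv₀ : 0 < v₀) (hk : 0 < k) (hm : 0 < m) (hγ : 0 ≤ γ)
    (hu : 0 ≤ u) (hv : 0 ≤ v)
    (hg : (γ + (1 - γ) * (u / (k + u))) * u * (v / (1 + v)) - m * u + ε = 0)
    (hh : -((γ + (1 - γ) * (u / (k + u))) * u * (v / (1 + v))) + σ * (v₀ - v) = 0) :
    (0 < u ∧ u < (ε + σ * v₀) / m) ∧ (0 < v ∧ v < v₀ + ε / σ) := by
  have hupos : 0 < u := by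
    rcases hu.lt_or_eq with h | h
    · exact h
    · exfalso; subst h; simp at hg; linarith
  have hvpos : 0 < v := by
    rcases hv.lt_or_eq with h | h
    · exact h
    · exfalso; subst h; simp at hh; rcases hh with h|h <;> nlinarith
  have hsum : m * u = ε + σ * (v₀ - v) := by linarith
  refine ⟨⟨hupos, ?_⟩, hvpos, ?_⟩
  · rw [lt_div_iff₀ hm]
    nlinarith [mul_pos hσ hvpos]
  · rw [← mul_lt_mul_iff_right₀ hσ, show σ * (v₀ + ε / σ) = σ * v₀ + ε by field_simp]
    nlinarith [mul_pos hm hupos]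
end

section
/- Let σ > 0 and m·(m−1) ≠ 0. If (u, v) ∈ ℝ² with k + u ≠ 0 and 1 + v ≠ 0 satisfies g(u,v) = 0 and h(u,v) = 0, then u satisfies the cubic equation u³ + b·u² + c·u + d = 0, where b = b_g·γ + b_s·σ + b₀, c = c_g·γ + c_s·σ + c_{sg}·σ·γ + c₀, d = d_s·σ + d₀, with b_g = −k/(m−1), b_s = (v₀ − v₀·m − m)/(m(m−1)), b₀ = (m²k + ε − 2mε)/(m(m−1)), c_g = εk/(m(m−1)), c_s = (v₀+1)(ε − mk)/(m(m−1)), c_{sg} = v₀k/(m(m−1)), c₀ = (−2mεk + ε²)/(m(m−1)), d_s = εk(v₀+1)/(m(m−1)), d₀ = ε²k/(m(m−1)). -/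
/-!
Adding the two equations gives the linear relation `σ v = σ v₀ - m u + ε`. Clearing the
denominators `k + u` and `1 + v` in `g = 0` gives an equation polynomial in `u` and linear in
`v`; multiplying it by `σ` and substituting `σ v` eliminates `v` and leaves `m (m - 1)` times
the cubic.
-/

section SteadyState

variable {γ k m ε σ v₀ u v : ℝ}

theorem sigma_mul_eq_of_steadyState
    (hg : (γ + (1 - γ) * (u / (k + u))) * u * (v / (1 + v)) - m * u + ε = 0)
    (hh : -((γ + (1 - γ) * (u / (k + u))) * u * (v / (1 + v))) + σ * (v₀ - v) = 0) :
    σ * v = σ * v₀ - m * u + ε := by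
  linear_combination -hg - hh

theorem uptake_mul_eq_of_steadyState (hku : k + u ≠ 0) (hv1 : 1 + v ≠ 0)
    (hg : (γ + (1 - γ) * (u / (k + u))) * u * (v / (1 + v)) - m * u + ε = 0) :
    (γ * (k + u) + (1 - γ) * u) * u * v = (m * u - ε) * (k + u) * (1 + v) := by
  field_simp at hg
  linear_combination hg

theorem clearedCubic_eq_zero
    (hA : (γ * (k + u) + (1 - γ) * u) * u * v = (m * u - ε) * (k + u) * (1 + v))
    (hv : σ * v = σ * v₀ - m * u + ε) :
    m * (m - 1) * u ^ 3
      + (-(k * m * γ) + (v₀ - v₀ * m - m) * σ + m ^ 2 * k + ε - 2 * m * ε) * u ^ 2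
      + (ε * k * γ + (v₀ + 1) * (ε - m * k) * σ + v₀ * k * σ * γ - 2 * m * ε * k + ε ^ 2) * u
      + (ε * k * (v₀ + 1) * σ + ε ^ 2 * k) = 0 := by
  linear_combination σ * hA - ((γ * (k + u) + (1 - γ) * u) * u - (m * u - ε) * (k + u)) * hv

end SteadyState

theorem stmt_5_general (γ k m ε σ v₀ u v : ℝ) (hm : m * (m - 1) ≠ 0)
    (hku : k + u ≠ 0) (hv1 : 1 + v ≠ 0)
    (hg : (γ + (1 - γ) * (u / (k + u))) * u * (v / (1 + v)) - m * u + ε = 0)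
    (hh : -((γ + (1 - γ) * (u / (k + u))) * u * (v / (1 + v))) + σ * (v₀ - v) = 0) :
    u ^ 3
      + ((-k / (m - 1)) * γ + ((v₀ - v₀ * m - m) / (m * (m - 1))) * σ
          + (m ^ 2 * k + ε - 2 * m * ε) / (m * (m - 1))) * u ^ 2
      + ((ε * k / (m * (m - 1))) * γ + ((v₀ + 1) * (ε - m * k) / (m * (m - 1))) * σ
          + (v₀ * k / (m * (m - 1))) * σ * γ
          + (-(2 * m * ε * k) + ε ^ 2) / (m * (m - 1))) * u
      + ((ε * k * (v₀ + 1) / (m * (m - 1))) * σ + ε ^ 2 * k / (m * (m - 1))) = 0 := by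
  have hm0 : m ≠ 0 := left_ne_zero_of_mul hm
  have hm1 : m - 1 ≠ 0 := right_ne_zero_of_mul hm
  have hcubic := clearedCubic_eq_zero (uptake_mul_eq_of_steadyState hku hv1 hg)
    (sigma_mul_eq_of_steadyState hg hh)
  field_simp
  linear_combination hcubic

/-- For σ > 0 and m(m−1) ≠ 0, the u-component of any homogeneous steady state of the
bacteria-nutrient kinetics satisfies the cubic u³ + b·u² + c·u + d = 0 with the
coefficients b = b_g·γ + b_s·σ + b₀, c = c_g·γ + c_s·σ + c_{sg}·σ·γ + c₀, d = d_s·σ + d₀. -/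
theorem stmt_5 (γ k m ε σ v₀ u v : ℝ) (hσ : 0 < σ) (hm : m * (m - 1) ≠ 0)
    (hku : k + u ≠ 0) (hv1 : 1 + v ≠ 0)
    (hg : (γ + (1 - γ) * (u / (k + u))) * u * (v / (1 + v)) - m * u + ε = 0)
    (hh : -((γ + (1 - γ) * (u / (k + u))) * u * (v / (1 + v))) + σ * (v₀ - v) = 0) :
    u ^ 3
      + ((-k / (m - 1)) * γ + ((v₀ - v₀ * m - m) / (m * (m - 1))) * σ
          + (m ^ 2 * k + ε - 2 * m * ε) / (m * (m - 1))) * u ^ 2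
      + ((ε * k / (m * (m - 1))) * γ + ((v₀ + 1) * (ε - m * k) / (m * (m - 1))) * σ
          + (v₀ * k / (m * (m - 1))) * σ * γ
          + (-(2 * m * ε * k) + ε ^ 2) / (m * (m - 1))) * u
      + ((ε * k * (v₀ + 1) / (m * (m - 1))) * σ + ε ^ 2 * k / (m * (m - 1))) = 0 :=
  stmt_5_general γ k m ε σ v₀ u v hm hku hv1 hg hh
end

section
/- Let g_u, g_v, h_u, h_v ∈ ℝ and δ > 0, let J be the 2×2 matrix with rows (g_u, g_v) and (h_u, h_v), and D = diag(1, δ). Define b₁ = −g_u − h_v, b₂ = g_u·h_v − g_v·h_u, b₃ = δg_u + h_v, b₄ = (δg_u + h_v)² − 4δ(g_u·h_v − g_v·h_u). If b₁ > 0, b₂ > 0, and (b₃ < 0 or b₄ < 0), then for every k ∈ ℝ: trace(J − k²·D) < 0 and det(J − k²·D) > 0. -/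
/-- Stability conditions: if b₁ > 0, b₂ > 0 and (b₃ < 0 or b₄ < 0), then for every
wavenumber k, the matrix J − k²D has negative trace and positive determinant. -/
theorem stmt_13 (gu gv hu hv δ : ℝ) (hδ : 0 < δ)
    (hb₁ : 0 < -gu - hv)
    (hb₂ : 0 < gu * hv - gv * hu)
    (hb₃₄ : δ * gu + hv < 0 ∨ (δ * gu + hv) ^ 2 - 4 * δ * (gu * hv - gv * hu) < 0) :
    ∀ k : ℝ,
      (!![gu, gv; hu, hv] - k ^ 2 • (Matrix.diagonal ![1, δ])).trace < 0 ∧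
      0 < (!![gu, gv; hu, hv] - k ^ 2 • (Matrix.diagonal ![1, δ])).det := by
  intro k
  have hk : 0 ≤ k ^ 2 := sq_nonneg k
  constructor
  · simp [Matrix.trace_fin_two, Matrix.sub_apply, Matrix.smul_apply, Matrix.diagonal_apply_eq,
        Matrix.cons_val_zero, Matrix.cons_val_one, Matrix.head_cons]
    nlinarith
  · rw [Matrix.det_fin_two]
    simp [Matrix.sub_apply, Matrix.smul_apply, Matrix.diagonal_apply_eq, Matrix.diagonal_apply_ne,
        Matrix.cons_val_zero, Matrix.cons_val_one, Matrix.head_cons]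
    rcases hb₃₄ with h | h
    · nlinarith [mul_nonneg (mul_nonneg hδ.le hk) hk, mul_nonneg hk (neg_nonneg.2 h.le)]
    · nlinarith [sq_nonneg (2 * δ * k ^ 2 - (δ * gu + hv)), mul_pos hδ hδ]
end
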